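/- arXiv:2205.10156 — 3 statements merged into one kernel-verified Lean document; each statement's English description precedes it below -/
import Mathlib

section
/- Let w be a word and v a primitive word such that v^{Index_w(v)} is a factor of w and Index_w(v) ≥ 2. Then Class_w(v) = {u^k : u ∈ [v], 2 ≤ k ≤ Index_w(v) − 1} ∪ MaxPow_w(v). -/
/-- `wpow u t` is the concatenation of `t` copies of the word `u`. -/
def wpow {α : Type*} (u : List α) (t : ℕ) : List α := (List.replicate t u).flatten

/-- A word is primitive if it is nonempty and not a power `u^n` with `n ≥ 2`. -/
def Primitive {α : Type*} (v : List α) : Prop :=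
  v ≠ [] ∧ ∀ (u : List α) (n : ℕ), 2 ≤ n → v ≠ wpow u n

/-- `classW w v` : the set of factors of `w` of the form `y^p` with `y` a conjugate
(rotation) of `v` and `p ≥ 2`. -/
def classW {α : Type*} (w v : List α) : Set (List α) :=
  {x | x <:+: w ∧ ∃ (y : List α) (p : ℕ), y ~r v ∧ 2 ≤ p ∧ x = wpow y p}

/-- `indexW w v = max { n ≥ 1 | u^n is a factor of w for some conjugate u of v }`,
i.e. `Index_w(v) = max { m_w(u) | u ∈ [v] }`. -/
noncomputable def indexW {α : Type*} (w v : List α) : ℕ :=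
  sSup {n : ℕ | ∃ u : List α, u ~r v ∧ wpow u n <:+: w}

/-- `maxPowW w v = { u^{Index_w(v)} | u ∈ [v] } ∩ Fac(w)`. -/
noncomputable def maxPowW {α : Type*} (w v : List α) : Set (List α) :=
  {x | (∃ u : List α, u ~r v ∧ x = wpow u (indexW w v)) ∧ x <:+: w}

lemma wpow_succ' {α : Type*} (u : List α) (n : ℕ) : wpow u (n + 1) = u ++ wpow u n := by
  simp [wpow, List.replicate_succ]

lemma wpow_add' {α : Type*} (u : List α) (m n : ℕ) :
    wpow u (m + n) = wpow u m ++ wpow u n := by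
  rw [wpow, wpow, wpow, List.replicate_add, List.flatten_append]

lemma wpow_rot {α : Type*} (a b : List α) (n : ℕ) :
    wpow (a ++ b) (n + 1) = a ++ (wpow (b ++ a) n ++ b) := by
  induction n with
  | zero => simp [wpow]
  | succ n ih =>
      rw [wpow_succ', ih, wpow_succ']
      simp only [List.append_assoc]

lemma wpow_prefix {α : Type*} (u : List α) {k n : ℕ} (h : k ≤ n) :
    wpow u k <+: wpow u n := by
  refine ⟨wpow u (n - k), ?_⟩
  rw [← wpow_add']
  congr 1
  omega

lemma wpow_infix_of_rotated {α : Type*} {u v : List α} (hu : u ~r v) {k n : ℕ}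
    (hk : k + 1 ≤ n) : wpow u k <:+: wpow v n := by
  rcases eq_or_ne u [] with rfl | hne
  · obtain ⟨m, hm⟩ := hu
    simp only [List.rotate_nil] at hm
    subst hm
    simp [wpow]
  · obtain ⟨m, hm⟩ := hu
    have hmlen : m % u.length < u.length := Nat.mod_lt _ (by simpa [List.length_pos_iff] using hne)
    have hv : v = u.drop (m % u.length) ++ u.take (m % u.length) := by
      rw [← hm, ← List.rotate_mod, List.rotate_eq_drop_append_take (le_of_lt hmlen)]
    have hu' : u = u.take (m % u.length) ++ u.drop (m % u.length) := by simp
    obtain ⟨n', rfl⟩ : ∃ n', n = n' + 1 := ⟨n - 1, by omega⟩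
    rw [hv, wpow_rot]
    have h1 : wpow u k <+: wpow u n' := wpow_prefix u (by omega)
    rw [← hu']
    obtain ⟨t, ht⟩ := h1
    exact ⟨u.drop (m % u.length), t ++ u.take (m % u.length), by rw [← ht]; simp⟩

/-- If `v` is primitive, `v^{Index_w(v)}` is a factor of `w` and
`Index_w(v) ≥ 2`, then
`Class_w(v) = { u^k | u ∈ [v], 2 ≤ k ≤ Index_w(v) - 1 } ∪ MaxPow_w(v)`. -/
theorem classW_eq_union_maxPow {α : Type*} (w v : List α) (hv : Primitive v)
    (hfac : wpow v (indexW w v) <:+: w) (hidx : 2 ≤ indexW w v) :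
    classW w v =
      {x | ∃ (u : List α) (k : ℕ), u ~r v ∧ 2 ≤ k ∧ k ≤ indexW w v - 1 ∧ x = wpow u k}
        ∪ maxPowW w v := by
  have hBdd : BddAbove {n : ℕ | ∃ u : List α, u ~r v ∧ wpow u n <:+: w} := by
    by_contra h
    rw [indexW, csSup_of_not_bddAbove h, csSup_empty] at hidx
    simp at hidx
  ext x
  constructor
  · rintro ⟨hxw, y, p, hy, hp, rfl⟩
    have hpI : p ≤ indexW w v := le_csSup hBdd ⟨y, hy, hxw⟩
    by_cases hpe : p = indexW w v
    · right
      exact ⟨⟨y, hy, by rw [hpe]⟩, hxw⟩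
    · left
      exact ⟨y, p, hy, hp, by omega, rfl⟩
  · rintro (⟨u, k, hu, hk2, hk, rfl⟩ | ⟨⟨u, hu, rfl⟩, hxw⟩)
    · refine ⟨?_, u, k, hu, hk2, rfl⟩
      exact (wpow_infix_of_rotated hu (by omega)).trans hfac
    · exact ⟨hxw, u, indexW w v, hu, hidx, rfl⟩
end

section
/- Let w be a word of length n and let l ∈ {1,…,n}. Suppose j ≤ l and there exist j distinct words v_1,…,v_j, each a length-l factor of w, and j distinct words e_1,…,e_j, each a length-(l+1) factor of w, such that for each t with 1 ≤ t ≤ j−1 the word v_t is a prefix of e_t and v_{t+1} is a suffix of e_t, and v_j is a prefix of e_j and v_1 is a suffix of e_j. Then there exists a primitive word q with |q| ≤ l, unique up to conjugacy, such that {v_1,…,v_j} = {q'^{l/|q'|} : q' ∈ [q]} and {e_1,…,e_j} = {q'^{(l+1)/|q'|} : q' ∈ [q]}, where x^{m/|x|} denotes the prefix of length m of the infinite periodic word xxx···. -/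
/-- `fracPow u m` : the prefix of length `m` of the infinite periodic word `uuu⋯`. -/
def fracPow {α : Type*} (u : List α) (m : ℕ) : List α := (wpow u m).take m

namespace BrlekAux

variable {α : Type*}

theorem getElem_congr' (x : List α) {a b : ℕ} (hab : a = b) (ha : a < x.length) :
    x[a]'ha = x[b]'(hab ▸ ha) := by subst hab; rfl

theorem wpow_length (u : List α) (t : ℕ) : (wpow u t).length = t * u.length := by
  simp [wpow, List.length_flatten, List.map_replicate, List.sum_replicate, smul_eq_mul]

theorem getElem_wpow (u : List α) (hu : u ≠ []) (t i : ℕ) (h : i < t * u.length) :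
    (wpow u t)[i]'(by rw [wpow_length]; exact h) =
      u[i % u.length]'(Nat.mod_lt _ (List.length_pos_iff.mpr hu)) := by
  induction t generalizing i with
  | zero => omega
  | succ t ih =>
    have hup : 0 < u.length := List.length_pos_iff.mpr hu
    have he : wpow u (t+1) = u ++ wpow u t := by
      simp [wpow, List.replicate_succ]
    rw [List.getElem_of_eq he (by rw [wpow_length]; exact h)]
    rcases Nat.lt_or_ge i u.length with hi | hi
    · rw [List.getElem_append_left hi]
      exact getElem_congr' u (Nat.mod_eq_of_lt hi).symm _
    · rw [List.getElem_append_right hi]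
      have h2 : i - u.length < t * u.length := by
        rw [Nat.add_mul, one_mul] at h; omega
      rw [ih (i - u.length) h2]
      exact getElem_congr' u (by rw [Nat.mod_eq_sub_mod hi]) _
  
theorem fracPow_length (u : List α) (hu : u ≠ []) (m : ℕ) : (fracPow u m).length = m := by
  have hup : 0 < u.length := List.length_pos_iff.mpr hu
  have : m ≤ m * u.length := Nat.le_mul_of_pos_right m hup
  rw [fracPow, List.length_take, wpow_length]; omega

theorem getElem_fracPow (u : List α) (hu : u ≠ []) (m i : ℕ) (h : i < m) :
    (fracPow u m)[i]'(by rw [fracPow_length u hu]; exact h) =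
      u[i % u.length]'(Nat.mod_lt _ (List.length_pos_iff.mpr hu)) := by
  have hup : 0 < u.length := List.length_pos_iff.mpr hu
  have h2 : i < m * u.length := lt_of_lt_of_le h (Nat.le_mul_of_pos_right m hup)
  show ((wpow u m).take m)[i]'_ = _
  exact List.getElem_take.trans (getElem_wpow u hu m i h2)

theorem fracPow_take (u : List α) (hu : u ≠ []) {m : ℕ} (h : u.length ≤ m) :
    (fracPow u m).take u.length = u := by
  have hup : 0 < u.length := List.length_pos_iff.mpr hu
  apply List.ext_getElem
  · rw [List.length_take, fracPow_length u hu]; omega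
  · intro i h1 h2
    rw [List.getElem_take]
    have hi : i < m := by omega
    rw [getElem_fracPow u hu m i hi]
    exact getElem_congr' u (Nat.mod_eq_of_lt h2) _

theorem period_mul {g : ℕ → α} {c : ℕ} (h : ∀ k, g (k + c) = g k) :
    ∀ a k, g (k + a * c) = g k := by
  intro a
  induction a with
  | zero => simp
  | succ a ih =>
    intro k
    have h1 : k + (a+1) * c = k + a * c + c := by ring
    rw [h1, h (k + a * c), ih k]

theorem period_gcd {g : ℕ → α} : ∀ c m : ℕ, (∀ k, g (k + c) = g k) → (∀ k, g (k + m) = g k) →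
    ∀ k, g (k + Nat.gcd c m) = g k := by
  intro c
  induction c using Nat.strong_induction_on with
  | _ c ih =>
    intro m hc hm k
    rcases Nat.eq_zero_or_pos c with h0 | h0
    · subst h0; simpa using hm k
    · rw [Nat.gcd_rec c m]
      have hmc : ∀ k, g (k + m % c) = g k := by
        intro k
        have h1 : g (k + m % c + m / c * c) = g (k + m % c) := period_mul hc _ _
        have h2 : k + m % c + m / c * c = k + m := by
          rw [add_assoc, Nat.mod_add_div' m c]
        rw [h2] at h1
        rw [← h1, hm]
      exact ih (m % c) (Nat.mod_lt m h0) c hmc hc k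

theorem not_primitive_of_cyclic_period (x : List α) (c : ℕ) (hc0 : 0 < c) (hcm : c < x.length)
    (hper : ∀ k (hk : k < x.length), x[(k + c) % x.length]'(Nat.mod_lt _ (by omega)) = x[k]'hk) :
    ¬ Primitive x := by
  set m := x.length with hm
  have hm0 : 0 < m := by omega
  set g : ℕ → α := fun i => x[i % m]'(Nat.mod_lt _ hm0) with hg
  have hgc : ∀ k, g (k + c) = g k := by
    intro k
    show x[(k + c) % m]'_ = x[k % m]'_
    rw [getElem_congr' x (show (k + c) % m = (k % m + c) % m from ((Nat.mod_modEq k m).add_right c).symm)]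
    exact hper (k % m) (Nat.mod_lt _ hm0)
  have hgm : ∀ k, g (k + m) = g k := by
    intro k
    show x[(k + m) % m]'_ = x[k % m]'_
    exact getElem_congr' x (Nat.add_mod_right k m) _
  set d := Nat.gcd c m with hd
  have hdm : d ∣ m := Nat.gcd_dvd_right c m
  have hd0 : 0 < d := Nat.gcd_pos_of_pos_left m hc0
  have hdc : d ≤ c := Nat.le_of_dvd hc0 (Nat.gcd_dvd_left c m)
  have gper : ∀ k, g (k + d) = g k := period_gcd c m hgc hgm
  have hxper : ∀ k (hk : k < m), x[k]'hk = x[k % d]'(by have := Nat.mod_lt k hd0; omega) := by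
    intro k hk
    have hkd : k % d < m := by have := Nat.mod_lt k hd0; omega
    have h2 : g (k % d + k / d * d) = g (k % d) := period_mul gper _ _
    rw [Nat.mod_add_div' k d] at h2
    have e1 : x[k]'hk = g k := getElem_congr' x (Nat.mod_eq_of_lt hk).symm _
    have e2 : g (k % d) = x[k % d]'hkd := getElem_congr' x (Nat.mod_eq_of_lt hkd) _
    rw [e1, h2]; exact e2
  intro hprim
  have hdiv : m / d * d = m := Nat.div_mul_cancel hdm
  have h2d : 2 ≤ m / d := by
    by_contra hcon
    push_neg at hcon
    have : m / d * d ≤ 1 * d := Nat.mul_le_mul_right d (by omega)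
    omega
  apply hprim.2 (x.take d) (m / d) h2d
  have htd : (x.take d).length = d := by rw [List.length_take]; omega
  have htne : x.take d ≠ [] := by
    intro hcon
    have := congrArg List.length hcon
    rw [htd] at this; simp at this; omega
  apply List.ext_getElem
  · rw [wpow_length, htd, hdiv]
  · intro i h1 h2
    have him : i < m := h1
    have h3 : i < (m / d) * (x.take d).length := by rw [htd, hdiv]; exact him
    rw [getElem_wpow (x.take d) htne (m/d) i h3]
    have h4 : i % (x.take d).length = i % d := by rw [htd]
    rw [getElem_congr' (x.take d) h4]
    rw [List.getElem_take]
    exact hxper i him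
  
end BrlekAux


open BrlekAux in
/-- Brlek–Li classification of small circuits. Let `w` be a word
of length `n`, `1 ≤ l ≤ n`, and `1 ≤ j ≤ l`. Suppose `v₁, …, vⱼ` are distinct
length-`l` factors of `w` and `e₁, …, eⱼ` are distinct length-`(l+1)` factors of `w`
such that each `vₜ` is a prefix of `eₜ` and `v_{t+1}` (cyclically) is a suffix of
`eₜ`. Then there exists a primitive word `q`, unique up to conjugacy, with `|q| ≤ l`,
`{v₁,…,vⱼ} = {q'^{l/|q'|} : q' ∈ [q]}` and `{e₁,…,eⱼ} = {q'^{(l+1)/|q'|} : q' ∈ [q]}`. -/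
theorem small_circuit_classification {α : Type*} (w : List α) (n l j : ℕ)
    (hn : w.length = n) (hl1 : 1 ≤ l) (hln : l ≤ n) (hj1 : 1 ≤ j) (hjl : j ≤ l)
    (v e : Fin j → List α) (hvinj : Function.Injective v) (heinj : Function.Injective e)
    (hvlen : ∀ t, (v t).length = l) (hvfac : ∀ t, v t <:+: w)
    (helen : ∀ t, (e t).length = l + 1) (hefac : ∀ t, e t <:+: w)
    (hpre : ∀ t, v t <+: e t)
    (hsuf : ∀ t : Fin j, v ⟨((t : ℕ) + 1) % j, Nat.mod_lt _ (by omega)⟩ <:+ e t) :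
    ∃ q : List α, Primitive q ∧ q.length ≤ l ∧
      Set.range v = {x | ∃ q' : List α, q' ~r q ∧ x = fracPow q' l} ∧
      Set.range e = {x | ∃ q' : List α, q' ~r q ∧ x = fracPow q' (l + 1)} ∧
      ∀ q₂ : List α, Primitive q₂ → q₂.length ≤ l →
        Set.range v = {x | ∃ q' : List α, q' ~r q₂ ∧ x = fracPow q' l} →
        Set.range e = {x | ∃ q' : List α, q' ~r q₂ ∧ x = fracPow q' (l + 1)} →
        q₂ ~r q := by
  classical
  have hj0 : 0 < j := hj1
  set lastE : Fin j → α := fun t => (e t)[l]'(by rw [helen]; omega) with hlastE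
  have hdropl : ∀ t : Fin j, (e t).drop l = [lastE t] := by
    intro t
    apply List.ext_getElem
    · rw [List.length_drop, helen]; simp
    · intro i h1 h2
      have hi0 : i = 0 := by rw [List.length_drop, helen] at h1; omega
      subst hi0
      rw [List.getElem_drop]
      simp only [hlastE, List.getElem_singleton]
      exact getElem_congr' (e t) (by omega) _
  have heeq : ∀ t : Fin j, e t = v t ++ [lastE t] := by
    intro t
    obtain ⟨d, hd⟩ := hpre t
    have hdd : (e t).drop l = d := by rw [← hd]; exact List.drop_left' (hvlen t)
    have hda : d = [lastE t] := by rw [← hdd, hdropl t]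
    rw [← hd, hda]
  have hsuf' : ∀ t : Fin j, v ⟨((t : ℕ) + 1) % j, Nat.mod_lt _ hj0⟩ = (e t).drop 1 := by
    intro t
    obtain ⟨c, hc⟩ := hsuf t
    have hcl : c.length = 1 := by
      have := congrArg List.length hc
      rw [List.length_append, hvlen, helen] at this; omega
    rw [← hc, List.drop_left' hcl]
  set U : List α := v ⟨0, hj0⟩ ++ List.ofFn lastE with hU
  have hUlen : U.length = l + j := by rw [hU, List.length_append, hvlen, List.length_ofFn]
  have hUl : U.take l = v ⟨0, hj0⟩ := List.take_left' (hvlen _)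
  have hUgetL : ∀ t (ht : t < j), U[l + t]'(by omega) = lastE ⟨t, ht⟩ := by
    intro t ht
    rw [List.getElem_of_eq hU]
    rw [List.getElem_append_right (by rw [hvlen]; omega)]
    rw [getElem_congr' _ (show l + t - (v ⟨0, hj0⟩).length = t by rw [hvlen]; omega)]
    exact List.getElem_ofFn _
  have htake1 : ∀ t (ht : t < j), U.take (l + t + 1) = U.take (l + t) ++ [lastE ⟨t, ht⟩] := by
    intro t ht
    rw [List.take_succ]
    congr 1
    rw [List.getElem?_eq_getElem (by omega : l + t < U.length)]
    rw [hUgetL t ht]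
    rfl
  have chain : ∀ t, t ≤ j → v ⟨t % j, Nat.mod_lt _ hj0⟩ = (U.take (l + t)).drop t := by
    intro t
    induction t with
    | zero =>
      intro _
      have h0 : (⟨0 % j, Nat.mod_lt _ hj0⟩ : Fin j) = ⟨0, hj0⟩ := by
        ext; simp [Nat.mod_eq_of_lt hj0]
      rw [h0]
      simp only [Nat.add_zero, List.drop_zero, hUl]
    | succ t ih =>
      intro h
      have ht : t < j := by omega
      have h1 := ih (Nat.le_of_lt ht)
      have htt : (⟨t % j, Nat.mod_lt _ hj0⟩ : Fin j) = ⟨t, ht⟩ := by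
        ext; simp [Nat.mod_eq_of_lt ht]
      rw [htt] at h1
      have h2 : v ⟨(t + 1) % j, Nat.mod_lt _ hj0⟩ = (e ⟨t, ht⟩).drop 1 := hsuf' ⟨t, ht⟩
      rw [h2, heeq ⟨t, ht⟩]
      show (v ⟨t, ht⟩ ++ [lastE ⟨t, ht⟩]).drop 1 = (U.take (l + t + 1)).drop (t + 1)
      rw [htake1 t ht]
      have hlen1 : t + 1 ≤ (U.take (l + t)).length := by rw [List.length_take]; omega
      have hlen2 : 1 ≤ (v ⟨t, ht⟩).length := by rw [hvlen]; omega
      rw [List.drop_append_of_le_length hlen1]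
      rw [List.drop_append_of_le_length hlen2]
      rw [h1, List.drop_drop]
  have hUdrop : U.drop j = v ⟨0, hj0⟩ := by
    have hch := chain j le_rfl
    have h0 : (⟨j % j, Nat.mod_lt _ hj0⟩ : Fin j) = ⟨0, hj0⟩ := by ext; simp
    rw [h0] at hch
    rw [hch]
    congr 1
    exact (List.take_of_length_le (by omega)).symm
  have hUper : ∀ k (hk : k < l + j),
      U[k]'(by omega) = U[k % j]'(by have := Nat.mod_lt k hj0; omega) := by
    intro k
    induction k using Nat.strong_induction_on with
    | _ k ih =>
      intro hk
      rcases Nat.lt_or_ge k j with h | h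
      · exact getElem_congr' U (Nat.mod_eq_of_lt h).symm _
      · have e1 : U[k]'(by omega) = (U.drop j)[k - j]'(by rw [List.length_drop, hUlen]; omega) := by
          rw [List.getElem_drop]
          exact getElem_congr' U (by omega) _
        have e2 : (U.drop j)[k - j]'(by rw [List.length_drop, hUlen]; omega)
            = (v ⟨0, hj0⟩)[k - j]'(by rw [hvlen]; omega) := List.getElem_of_eq hUdrop _
        have e3 : (U.take l)[k - j]'(by rw [List.length_take]; omega)
            = (v ⟨0, hj0⟩)[k - j]'(by rw [hvlen]; omega) := List.getElem_of_eq hUl _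
        have e4 : (U.take l)[k - j]'(by rw [List.length_take]; omega) = U[k - j]'(by omega) :=
          List.getElem_take
        have e5 := ih (k - j) (by omega) (by omega)
        have e6 : U[(k - j) % j]'(by have := Nat.mod_lt (k - j) hj0; omega)
            = U[k % j]'(by have := Nat.mod_lt k hj0; omega) :=
          getElem_congr' U (Nat.mod_eq_sub_mod h).symm _
        exact e1.trans (e2.trans (e3.symm.trans (e4.trans (e5.trans e6))))
  set p : List α := U.take j with hp
  have hplen : p.length = j := by rw [hp, List.length_take]; omega
  have hpne : p ≠ [] := List.length_pos_iff.mp (by omega)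
  have hrotne : ∀ t : ℕ, p.rotate t ≠ [] := fun t =>
    List.length_pos_iff.mp (by rw [List.length_rotate]; omega)
  have hUp : ∀ k, k < l + j → ∀ (h1 : k < U.length) (h2 : k % j < p.length),
      U[k]'h1 = p[k % j]'h2 := by
    intro k hk h1 h2
    have e2 : p[k % j]'h2 = U[k % j]'(by have := Nat.mod_lt k hj0; omega) :=
      (List.getElem_of_eq hp h2).trans List.getElem_take
    exact (hUper k hk).trans e2.symm
  have hfrac : ∀ (t : ℕ), t < j → ∀ (M : ℕ), t + M ≤ l + j →
      (U.take (t + M)).drop t = fracPow (p.rotate t) M := by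
    intro t ht M hM
    have hrl : (p.rotate t).length = j := by rw [List.length_rotate, hplen]
    apply List.ext_getElem
    · rw [List.length_drop, List.length_take, fracPow_length _ (hrotne t), hUlen]; omega
    · intro i h1 h2
      have hiM : i < M := by rw [fracPow_length _ (hrotne t)] at h2; exact h2
      rw [List.getElem_drop, List.getElem_take]
      rw [getElem_fracPow _ (hrotne t) M i hiM]
      rw [List.getElem_rotate]
      rw [hUp (t + i) (by rw [List.length_drop, List.length_take] at h1; omega) _
        (by rw [hplen]; exact Nat.mod_lt _ hj0)]
      exact getElem_congr' p
        (by rw [hrl, hplen, (Nat.mod_modEq i j).add_right t, Nat.add_comm t i]) _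
  have hvfr : ∀ t : Fin j, v t = fracPow (p.rotate (t : ℕ)) l := by
    intro t
    have h1 := chain t (Nat.le_of_lt t.2)
    have htt : (⟨(t : ℕ) % j, Nat.mod_lt _ hj0⟩ : Fin j) = t := by
      ext; simp [Nat.mod_eq_of_lt t.2]
    rw [htt] at h1
    rw [h1]
    have h2 := hfrac t t.2 l (by omega)
    rw [show (t : ℕ) + l = l + t by omega] at h2
    exact h2
  have hefr : ∀ t : Fin j, e t = fracPow (p.rotate (t : ℕ)) (l + 1) := by
    intro t
    have h1 := chain t (Nat.le_of_lt t.2)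
    have htt : (⟨(t : ℕ) % j, Nat.mod_lt _ hj0⟩ : Fin j) = t := by
      ext; simp [Nat.mod_eq_of_lt t.2]
    rw [htt] at h1
    have h3 : (U.take (l + (t : ℕ) + 1)).drop (t : ℕ)
        = (U.take (l + (t : ℕ))).drop (t : ℕ) ++ [lastE t] := by
      rw [htake1 (t : ℕ) t.2]
      have hlen1 : (t : ℕ) ≤ (U.take (l + (t : ℕ))).length := by rw [List.length_take]; omega
      rw [List.drop_append_of_le_length hlen1]
    have h4 : e t = (U.take (l + (t : ℕ) + 1)).drop (t : ℕ) := by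
      rw [heeq t, h3, ← h1]
    rw [h4]
    have h5 := hfrac t t.2 (l + 1) (by omega)
    rw [show (t : ℕ) + (l + 1) = l + (t : ℕ) + 1 by omega] at h5
    exact h5
  have hgp : ∀ (u : List α), u ≠ [] → ∀ (nn : ℕ), p = wpow u nn →
      ∀ k (hk : k < p.length) (hk2 : k % u.length < u.length), p[k]'hk = u[k % u.length]'hk2 := by
    intro u hune nn hpu k hk hk2
    rw [List.getElem_of_eq hpu hk]
    exact getElem_wpow u hune nn k (by rw [← wpow_length, ← hpu]; exact hk)
  have hprim : Primitive p := by
    refine ⟨hpne, ?_⟩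
    intro u nn hnn hpu
    have hlen2 : j = nn * u.length := by rw [← hplen, hpu, wpow_length]
    have hu0 : 0 < u.length := by
      rcases Nat.eq_zero_or_pos u.length with h | h
      · rw [h, Nat.mul_zero] at hlen2; omega
      · exact h
    have hune : u ≠ [] := by intro hc; rw [hc] at hu0; simp at hu0
    set d := u.length with hdd
    have hdj : d < j := by
      have h2d : 2 * d ≤ nn * d := mul_le_mul_left hnn d
      omega
    have hddvd : d ∣ j := ⟨nn, by rw [hlen2, Nat.mul_comm]⟩
    have prot : p.rotate d = p := by
      apply List.ext_getElem
      · rw [List.length_rotate]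
      · intro i h1 h2
        rw [List.getElem_rotate]
        rw [hgp u hune nn hpu ((i + d) % p.length) (Nat.mod_lt _ (by omega)) (Nat.mod_lt _ hu0)]
        rw [hgp u hune nn hpu i h2 (Nat.mod_lt _ hu0)]
        exact getElem_congr' u
          (by rw [hplen, Nat.mod_mod_of_dvd _ hddvd, Nat.add_mod_right]) _
    have hvd : v ⟨d, by omega⟩ = v ⟨0, hj0⟩ := by
      rw [hvfr, hvfr]
      show fracPow (p.rotate d) l = fracPow (p.rotate 0) l
      rw [prot, List.rotate_zero]
    have := hvinj hvd
    simp only [Fin.mk.injEq] at this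
    omega
  have hSv : Set.range v = {x | ∃ q' : List α, q' ~r p ∧ x = fracPow q' l} := by
    ext x
    constructor
    · rintro ⟨t, rfl⟩
      exact ⟨p.rotate (t : ℕ), List.IsRotated.symm (⟨(t : ℕ), rfl⟩ : p ~r p.rotate (t : ℕ)), hvfr t⟩
    · rintro ⟨q', hq', rfl⟩
      obtain ⟨mm, hmm⟩ := List.IsRotated.symm hq'
      refine ⟨⟨mm % j, Nat.mod_lt _ hj0⟩, ?_⟩
      rw [hvfr]
      congr 1
      have hrm := List.rotate_mod p mm
      rw [hplen] at hrm
      rw [hrm, hmm]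
  have hSe : Set.range e = {x | ∃ q' : List α, q' ~r p ∧ x = fracPow q' (l + 1)} := by
    ext x
    constructor
    · rintro ⟨t, rfl⟩
      exact ⟨p.rotate (t : ℕ), List.IsRotated.symm (⟨(t : ℕ), rfl⟩ : p ~r p.rotate (t : ℕ)), hefr t⟩
    · rintro ⟨q', hq', rfl⟩
      obtain ⟨mm, hmm⟩ := List.IsRotated.symm hq'
      refine ⟨⟨mm % j, Nat.mod_lt _ hj0⟩, ?_⟩
      rw [hefr]
      congr 1
      have hrm := List.rotate_mod p mm
      rw [hplen] at hrm
      rw [hrm, hmm]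
  refine ⟨p, hprim, by omega, hSv, hSe, ?_⟩
  intro q₂ h2prim h2len hv2 he2
  have hm1 : 0 < q₂.length := List.length_pos_iff.mpr h2prim.1
  have hmem : ∀ q' : List α, q' ~r q₂ → ∃ t : Fin j, fracPow q' (l + 1) = e t := by
    intro q' hq'
    have hx : fracPow q' (l + 1) ∈ Set.range e := by
      rw [he2]; exact ⟨q', hq', rfl⟩
    obtain ⟨t, ht⟩ := hx
    exact ⟨t, ht.symm⟩
  -- step A : q₂.length ≤ j
  have hq2per : ∀ k (hk : k < q₂.length),
      q₂[(k + j) % q₂.length]'(Nat.mod_lt _ hm1) = q₂[k]'hk := by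
    intro k hk
    obtain ⟨t, ht⟩ := hmem (q₂.rotate k) (List.IsRotated.symm ⟨k, rfl⟩)
    rw [hefr t] at ht
    have hrkne : q₂.rotate k ≠ [] := List.length_pos_iff.mp (by rw [List.length_rotate]; omega)
    have e0 := List.getElem_of_eq ht
      (show (0 : ℕ) < (fracPow (q₂.rotate k) (l + 1)).length by
        rw [fracPow_length _ hrkne]; omega)
    rw [getElem_fracPow _ hrkne (l + 1) 0 (by omega),
        getElem_fracPow _ (hrotne _) (l + 1) 0 (by omega)] at e0
    have ej := List.getElem_of_eq ht
      (show j < (fracPow (q₂.rotate k) (l + 1)).length by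
        rw [fracPow_length _ hrkne]; omega)
    rw [getElem_fracPow _ hrkne (l + 1) j (by omega),
        getElem_fracPow _ (hrotne _) (l + 1) j (by omega)] at ej
    rw [List.getElem_rotate] at e0 ej
    simp only [List.length_rotate] at e0 ej
    -- e0 : q₂[(0 % q₂.length + k) % q₂.length] = (p.rotate t)[0 % (p.rotate t).length]
    -- ej : q₂[(j % q₂.length + k) % q₂.length] = (p.rotate t)[j % (p.rotate t).length]
    have i1 : (k + j) % q₂.length = (j % q₂.length + k) % q₂.length := by
      rw [(Nat.mod_modEq j q₂.length).add_right k, Nat.add_comm j k]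
    have i2 : (0 % q₂.length + k) % q₂.length = k := by
      rw [Nat.zero_mod, Nat.zero_add, Nat.mod_eq_of_lt hk]
    have i3 : (j : ℕ) % p.length = 0 % p.length := by
      rw [hplen, Nat.mod_self, Nat.zero_mod]
    rw [getElem_congr' q₂ i1]
    rw [ej, getElem_congr' (p.rotate (t : ℕ)) i3, ← e0]
    exact getElem_congr' q₂ i2 _
  have hmj : q₂.length ≤ j := by
    by_contra hcon
    push_neg at hcon
    exact not_primitive_of_cyclic_period q₂ j hj0 (by omega) hq2per h2prim
  -- step B : j ≤ q₂.length
  have hmemp : ∀ t : Fin j, ∃ q' : List α, q' ~r q₂ ∧ e t = fracPow q' (l + 1) := by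
    intro t
    have hx : e t ∈ {x | ∃ q' : List α, q' ~r q₂ ∧ x = fracPow q' (l + 1)} := by
      rw [← he2]; exact ⟨t, rfl⟩
    exact hx
  have hp0 : 0 < p.length := by omega
  have hpper : ∀ k (hk : k < p.length),
      p[(k + q₂.length) % p.length]'(Nat.mod_lt _ hp0) = p[k]'hk := by
    intro k hk
    have hkj : k < j := by omega
    obtain ⟨q', hq', hq'e⟩ := hmemp ⟨k, hkj⟩
    rw [hefr ⟨k, hkj⟩] at hq'e
    have hq'len : q'.length = q₂.length := hq'.perm.length_eq
    have hq'ne : q' ≠ [] := List.length_pos_iff.mp (by rw [hq'len]; omega)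
    have e0 := List.getElem_of_eq hq'e
      (show (0 : ℕ) < (fracPow (p.rotate k) (l + 1)).length by
        rw [fracPow_length _ (hrotne _)]; omega)
    rw [getElem_fracPow _ (hrotne _) (l + 1) 0 (by omega),
        getElem_fracPow _ hq'ne (l + 1) 0 (by omega)] at e0
    have em := List.getElem_of_eq hq'e
      (show q₂.length < (fracPow (p.rotate k) (l + 1)).length by
        rw [fracPow_length _ (hrotne _)]; omega)
    rw [getElem_fracPow _ (hrotne _) (l + 1) q₂.length (by omega),
        getElem_fracPow _ hq'ne (l + 1) q₂.length (by omega)] at em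
    rw [List.getElem_rotate] at e0 em
    simp only [List.length_rotate] at e0 em
    -- e0 : p[(0 % p.length + k) % p.length] = q'[0 % q'.length]
    -- em : p[(q₂.length % p.length + k) % p.length] = q'[q₂.length % q'.length]
    have i1 : (k + q₂.length) % p.length = (q₂.length % p.length + k) % p.length := by
      rw [(Nat.mod_modEq q₂.length p.length).add_right k, Nat.add_comm q₂.length k]
    have i2 : (0 % p.length + k) % p.length = k := by
      rw [Nat.zero_mod, Nat.zero_add, Nat.mod_eq_of_lt hk]
    have i3 : q₂.length % q'.length = 0 % q'.length := by
      rw [hq'len, Nat.mod_self, Nat.zero_mod]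
    rw [getElem_congr' p i1]
    rw [em, getElem_congr' q' i3, ← e0]
    exact getElem_congr' p i2 _
  have hjm : j ≤ q₂.length := by
    by_contra hcon
    push_neg at hcon
    exact not_primitive_of_cyclic_period p q₂.length hm1 (by omega) hpper hprim
  have hmeq : q₂.length = j := le_antisymm hmj hjm
  obtain ⟨t, ht⟩ := hmem q₂ (List.IsRotated.refl q₂)
  rw [hefr t] at ht
  have h2 : (fracPow q₂ (l + 1)).take q₂.length = q₂ := fracPow_take q₂ h2prim.1 (by omega)
  have h3 : (fracPow (p.rotate (t : ℕ)) (l + 1)).take (p.rotate (t : ℕ)).length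
      = p.rotate (t : ℕ) := fracPow_take _ (hrotne _) (by rw [List.length_rotate, hplen]; omega)
  have h1 : q₂ = p.rotate (t : ℕ) := by
    rw [← h2, ht, show q₂.length = (p.rotate (t : ℕ)).length by
      rw [List.length_rotate, hplen]; omega]
    exact h3
  rw [h1]
  exact List.IsRotated.symm (⟨(t : ℕ), rfl⟩ : p ~r p.rotate (t : ℕ))
end

section
/- For any word w, there exists an injective function from Powers(w) — the set of distinct factors of w that are powers of exponent at least 2 — into the set of pairs (C, l) where 1 ≤ l ≤ |w| − 1 and C is a conjugacy class of a primitive word q with |q| ≤ l such that every fractional power q'^{(l+1)/|q'|} for q' ∈ [q] is a factor of w. -/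
/-- The set of pairs `(C, l)` with `1 ≤ l ≤ |w| - 1` and `C` the conjugacy class of
a primitive word `q` with `|q| ≤ l` such that every fractional power
`q'^{(l+1)/|q'|}`, for `q'` conjugate to `q`, is a factor of `w`. These pairs
identify the small circuits in the Rauzy graphs of `w`. -/
def smallCircuits {α : Type*} (w : List α) : Set (Set (List α) × ℕ) :=
  {p | 1 ≤ p.2 ∧ p.2 ≤ w.length - 1 ∧
    ∃ q : List α, Primitive q ∧ q.length ≤ p.2 ∧ p.1 = {q' | q' ~r q} ∧
      ∀ q' : List α, q' ~r q → fracPow q' (p.2 + 1) <:+: w}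

namespace PowAux
open List

variable {α : Type*}

open scoped Classical

lemma wpow_zero (u : List α) : wpow u 0 = [] := rfl

lemma wpow_succ (u : List α) (k : ℕ) : wpow u (k+1) = u ++ wpow u k := by
  simp [wpow, List.replicate_succ]

lemma wpow_one (u : List α) : wpow u 1 = u := by simp [wpow_succ, wpow_zero]

lemma wpow_length (u : List α) (k : ℕ) : (wpow u k).length = k * u.length := by
  induction k with
  | zero => simp [wpow_zero]
  | succ k ih => simp [wpow_succ, ih]; ring

lemma wpow_add (u : List α) (a b : ℕ) : wpow u (a+b) = wpow u a ++ wpow u b := by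
  induction a with
  | zero => simp [wpow_zero]
  | succ a ih => rw [Nat.succ_add, wpow_succ, wpow_succ, ih, List.append_assoc]

lemma wpow_wpow (u : List α) (a b : ℕ) : wpow (wpow u a) b = wpow u (b*a) := by
  induction b with
  | zero => simp [wpow_zero]
  | succ b ih => rw [wpow_succ, ih, Nat.succ_mul, Nat.add_comm, wpow_add]

lemma wpow_prefix (u : List α) {a b : ℕ} (h : a ≤ b) : wpow u a <+: wpow u b := by
  obtain ⟨c, rfl⟩ := Nat.exists_eq_add_of_le h
  exact ⟨wpow u c, (wpow_add u a c).symm⟩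

lemma take_wpow {u : List α} (hu : u ≠ []) {M a : ℕ} (h : M ≤ a * u.length) :
    (wpow u a).take M = fracPow u M := by
  have hu1 : 1 ≤ u.length := List.length_pos_iff.mpr hu
  have h2 : M ≤ M * u.length := Nat.le_mul_of_pos_right M hu1
  rcases Nat.le_total a M with hab | hab
  · obtain ⟨t, ht⟩ := wpow_prefix u hab
    rw [fracPow, ← ht, ← take_append_of_le_length (l₂ := t) (by rw [wpow_length]; exact h), ht]
  · obtain ⟨t, ht⟩ := wpow_prefix u hab
    rw [fracPow, ← ht, take_append_of_le_length (by rw [wpow_length]; exact h2)]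

lemma fracPow_take {u : List α} (hu : u ≠ []) {m M : ℕ} (h : m ≤ M) :
    (fracPow u M).take m = fracPow u m := by
  have hu1 : 1 ≤ u.length := List.length_pos_iff.mpr hu
  rw [fracPow, List.take_take, Nat.min_eq_left h,
    take_wpow hu (le_trans h (Nat.le_mul_of_pos_right M hu1))]


lemma rot_wpow (r : List α) (d m : ℕ) (hd : d ≤ r.length) :
    wpow (r.rotate d) (m+1) = (r.drop d ++ wpow r m) ++ r.take d := by
  induction m with
  | zero => simp [wpow_one, wpow_zero, List.rotate_eq_drop_append_take hd]
  | succ m ih =>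
      rw [wpow_succ, ih, List.rotate_eq_drop_append_take hd]
      rw [wpow_succ r m]
      simp only [List.append_assoc]
      rw [← List.append_assoc (r.take d) (r.drop d), List.take_append_drop]

lemma drop_wpow {r : List α} (hr : r ≠ []) {d k : ℕ} (hd : d ≤ r.length) (hk : 1 ≤ k) :
    (wpow r k).drop d = fracPow (r.rotate d) (k * r.length - d) := by
  obtain ⟨m, rfl⟩ := Nat.exists_eq_add_of_le hk
  have hlen : (r.drop d ++ wpow r m).length = (1+m) * r.length - d := by
    simp [wpow_length, Nat.add_mul]; omega
  have h1 : (wpow r (1+m)).drop d = r.drop d ++ wpow r m := by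
    rw [Nat.add_comm 1 m, wpow_succ, drop_append_of_le_length hd]
  have hrot : (r.rotate d) ≠ [] := by
    simpa using hr
  have h2 : fracPow (r.rotate d) ((1+m) * r.length - d) =
      (wpow (r.rotate d) (m+1)).take ((1+m) * r.length - d) :=
    (take_wpow hrot (by rw [List.length_rotate, Nat.add_mul, Nat.add_mul]; omega)).symm
  rw [h1, h2, rot_wpow r d m hd, take_append_of_le_length (le_of_eq hlen.symm), ← hlen,
    List.take_length]

lemma frac_infix_mono {w u : List α} (hu : u ≠ []) {a b : ℕ} (h : a ≤ b)
    (hw : fracPow u b <:+: w) : fracPow u a <:+: w := by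
  rw [← fracPow_take hu h]
  exact ((fracPow u b).take_prefix a).isInfix.trans hw

lemma frac_of_pow_infix {w r : List α} (hr : r ≠ []) {d k : ℕ} (hd : d ≤ r.length)
    (hk : 1 ≤ k) (hw : wpow r k <:+: w) :
    fracPow (r.rotate d) (k * r.length - d) <:+: w := by
  rw [← drop_wpow hr hd hk]
  exact ((wpow r k).drop_suffix d).isInfix.trans hw

lemma wpow_nil (n : ℕ) : wpow ([] : List α) n = [] :=
  List.length_eq_zero_iff.mp (by rw [wpow_length]; simp)

lemma exists_prim_root_aux : ∀ (N : ℕ) (x : List α), x.length ≤ N → x ≠ [] →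
    ∃ q k, Primitive q ∧ 1 ≤ k ∧ x = wpow q k := by
  intro N
  induction N with
  | zero =>
      intro x h hx
      exact absurd (List.length_eq_zero_iff.mp (Nat.le_zero.mp h)) hx
  | succ N ih =>
      intro x hlen hx
      by_cases hp : Primitive x
      · exact ⟨x, 1, hp, le_refl 1, (wpow_one x).symm⟩
      · unfold Primitive at hp
        push_neg at hp
        obtain ⟨u, n, hn, hxu⟩ := hp hx
        have hu : u ≠ [] := by
          rintro rfl
          rw [hxu, wpow_nil] at hx
          exact hx rfl
        have hu1 : 1 ≤ u.length := List.length_pos_iff.mpr hu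
        have hul : u.length < x.length := by
          rw [hxu, wpow_length]
          nlinarith
        obtain ⟨q, k, hq, hk, huq⟩ := ih u (by omega) hu
        exact ⟨q, n * k, hq, Nat.mul_pos (by omega) hk,
          by rw [hxu, huq, wpow_wpow]⟩

lemma exists_prim_root (x : List α) (hx : x ≠ []) :
    ∃ q k, Primitive q ∧ 1 ≤ k ∧ x = wpow q k :=
  exists_prim_root_aux x.length x le_rfl hx


lemma rank_lt {D : Finset ℕ} {i : ℕ} (h : i ∈ D) :
    (D.filter (· < i)).card < D.card :=
  Finset.card_lt_card (Finset.filter_ssubset.mpr ⟨i, h, lt_irrefl i⟩)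

lemma rank_inj {D : Finset ℕ} {i₁ i₂ : ℕ} (h₁ : i₁ ∈ D) (h₂ : i₂ ∈ D)
    (h : (D.filter (· < i₁)).card = (D.filter (· < i₂)).card) : i₁ = i₂ := by
  by_contra hne
  wlog hlt : i₁ < i₂ generalizing i₁ i₂
  · exact this h₂ h₁ h.symm (Ne.symm hne) (by omega)
  have hsub : D.filter (· < i₁) ⊆ D.filter (· < i₂) := by
    intro x hx
    simp only [Finset.mem_filter] at *
    exact ⟨hx.1, hx.2.trans hlt⟩
  have hss : D.filter (· < i₁) ⊂ D.filter (· < i₂) :=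
    (Finset.ssubset_iff_of_subset hsub).mpr
      ⟨i₁, Finset.mem_filter.mpr ⟨h₁, hlt⟩, by simp⟩
  exact absurd h (Finset.card_lt_card hss).ne

lemma mod_char {n j i : ℕ} (hn : 0 < n) (hj : j < n) (hi : i < n) :
    (j + n - i) % n = if i ≤ j then j - i else j + n - i := by
  split_ifs with h
  · have he : j + n - i = (j - i) + n := by omega
    rw [he, Nat.add_mod_right, Nat.mod_eq_of_lt (by omega)]
  · exact Nat.mod_eq_of_lt (by omega)

lemma exists_small {n : ℕ} {D : Finset ℕ} (hD : ∀ i ∈ D, i < n) (hne : D.Nonempty)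
    (j : ℕ) (hj : j < n) :
    ∃ i ∈ D, (j + n - i) % n ≤ n - D.card := by
  have hn : 0 < n := lt_of_le_of_lt (Nat.zero_le j) hj
  by_contra hc
  push_neg at hc
  set g : ℕ → ℕ := fun i => (j + n - i) % n with hg
  have hginj : Set.InjOn g D := by
    intro a ha b hb hab
    have ha' := hD a (Finset.mem_coe.mp ha)
    have hb' := hD b (Finset.mem_coe.mp hb)
    simp only [hg] at hab
    rw [mod_char hn hj ha', mod_char hn hj hb'] at hab
    split_ifs at hab <;> omega
  have himg : D.image g ⊆ Finset.Ico (n - D.card + 1) n := by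
    intro y hy
    simp only [Finset.mem_image] at hy
    obtain ⟨i, hi, rfl⟩ := hy
    have h1 : n - D.card < g i := hc i hi
    have h2 : g i < n := Nat.mod_lt _ hn
    exact Finset.mem_Ico.mpr ⟨by omega, h2⟩
  have hcard : D.card ≤ n := by
    have hsub : D ⊆ Finset.range n := fun i hi => Finset.mem_range.mpr (hD i hi)
    simpa using Finset.card_le_card hsub
  have h1 : D.card = (D.image g).card := (Finset.card_image_of_injOn hginj).symm
  have h2 := Finset.card_le_card himg
  rw [Nat.card_Ico] at h2
  have hpos : 0 < D.card := Finset.card_pos.mpr hne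
  omega

lemma frac_avail {w q : List α} (hq : q ≠ []) {k : ℕ} (hk : 1 ≤ k)
    {D : Finset ℕ} (hDdef : ∀ i ∈ D, i < q.length ∧ wpow (q.rotate i) k <:+: w)
    (hne : D.Nonempty) {j : ℕ} (hj : j < q.length) :
    fracPow (q.rotate j) (k * q.length - (q.length - D.card)) <:+: w := by
  set n := q.length with hn
  obtain ⟨i, hi, hile⟩ := exists_small (fun i hi => (hDdef i hi).1) hne j hj
  obtain ⟨hin, hpow⟩ := hDdef i hi
  set d := (j + n - i) % n with hd
  have hn0 : 0 < n := lt_of_le_of_lt (Nat.zero_le j) hj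
  have hdn : d < n := Nat.mod_lt _ hn0
  have hr : (q.rotate i) ≠ [] := by
    simpa using hq
  have h1 := frac_of_pow_infix hr (d := d) (by rw [List.length_rotate]; omega) hk hpow
  have hmodeq : (i + d) % n = j % n := by
    have step1 : i + d ≡ i + (j + n - i) [MOD n] := Nat.ModEq.add_left i (Nat.mod_modEq _ n)
    have step2 : i + (j + n - i) = j + n := by omega
    have step3 : (j + n) % n = j % n := Nat.add_mod_right j n
    exact step1.trans (by rw [step2]; exact step3)
  have hmod : (i + d) % n = j := by rw [hmodeq, Nat.mod_eq_of_lt hj]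
  have hrot : (q.rotate i).rotate d = q.rotate j := by
    rw [List.rotate_rotate, ← hmod, hn]
    exact (q.rotate_mod (i + d)).symm
  rw [hrot, List.length_rotate, ← hn] at h1
  exact frac_infix_mono (by simpa using hq) (Nat.sub_le_sub_left hile _) h1


noncomputable def rep (x : List α) : List α :=
  (@Quotient.mk _ (List.IsRotated.setoid α) x).out

lemma rep_rot (x : List α) : rep x ~r x :=
  @Quotient.mk_out _ (List.IsRotated.setoid α) x

lemma rep_eq {x y : List α} (h : x ~r y) : rep x = rep y :=
  congrArg Quotient.out (Quotient.sound h)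

lemma rep_length (x : List α) : (rep x).length = x.length :=
  (rep_rot x).perm.length_eq

lemma exists_prim_root' (x : List α) (hx : x ≠ []) :
    ∃ p : List α × ℕ, Primitive p.1 ∧ 1 ≤ p.2 ∧ x = wpow p.1 p.2 := by
  obtain ⟨q, k, h1, h2, h3⟩ := exists_prim_root x hx
  exact ⟨(q, k), h1, h2, h3⟩

noncomputable def prD (x : List α) : List α × ℕ :=
  if h : x ≠ [] then (exists_prim_root' x h).choose else ([], 0)

lemma prD_spec {x : List α} (hx : x ≠ []) :
    Primitive (prD x).1 ∧ 1 ≤ (prD x).2 ∧ x = wpow (prD x).1 (prD x).2 := by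
  rw [prD, dif_pos hx]
  exact (exists_prim_root' x hx).choose_spec

lemma exists_idx (x : List α) (hx : x ≠ []) :
    ∃ i, i < (rep x).length ∧ (rep x).rotate i = x := by
  have h0 : 0 < (rep x).length := by rw [rep_length]; exact List.length_pos_iff.mpr hx
  obtain ⟨m, hm, hrot⟩ := List.isRotated_iff_mod.mp (rep_rot x)
  exact ⟨m % (rep x).length, Nat.mod_lt _ h0, by rw [List.rotate_mod]; exact hrot⟩

noncomputable def idx (x : List α) : ℕ :=
  if h : x ≠ [] then (exists_idx x h).choose else 0

lemma idx_spec {x : List α} (hx : x ≠ []) :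
    idx x < (rep x).length ∧ (rep x).rotate (idx x) = x := by
  rw [idx, dif_pos hx]
  exact (exists_idx x hx).choose_spec

noncomputable def theD (w x : List α) : Finset ℕ :=
  (Finset.range (rep (prD x).1).length).filter
    (fun i' => wpow ((rep (prD x).1).rotate i') (prD x).2 <:+: w)

noncomputable def assign (w x : List α) : Set (List α) × ℕ :=
  ({y | y ~r (prD x).1},
    ((prD x).2 - 1) * (rep (prD x).1).length +
      ((theD w x).filter (· < idx (prD x).1)).card)

/-- bundled facts -/
lemma setup {w x : List α}
    (hx : ∃ (u : List α) (t : ℕ), u ≠ [] ∧ 2 ≤ t ∧ x = wpow u t) (hxw : x <:+: w) :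
    Primitive (prD x).1 ∧ 2 ≤ (prD x).2 ∧ x = wpow (prD x).1 (prD x).2 ∧
      0 < (rep (prD x).1).length ∧
      idx (prD x).1 ∈ theD w x ∧
      (theD w x).card ≤ (rep (prD x).1).length ∧
      (prD x).2 * (rep (prD x).1).length ≤ w.length := by
  obtain ⟨u, t, hu, ht, hxut⟩ := hx
  have hu1 : 1 ≤ u.length := List.length_pos_iff.mpr hu
  have hxne : x ≠ [] := by
    intro h
    have hl := congrArg List.length hxut
    rw [h, wpow_length] at hl
    simp only [List.length_nil] at hl
    nlinarith
  obtain ⟨hprim, hk1, hxq⟩ := prD_spec hxne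
  set q₀ := (prD x).1 with hq₀
  set k := (prD x).2 with hk
  have hq₀ne : q₀ ≠ [] := hprim.1
  have hk2 : 2 ≤ k := by
    by_contra hlt
    have hk1' : k = 1 := by omega
    rw [hk1', wpow_one] at hxq
    exact hprim.2 u t ht (hxq ▸ hxut)
  have hn0 : 0 < (rep q₀).length := by
    rw [rep_length]; exact List.length_pos_iff.mpr hq₀ne
  obtain ⟨hidx, hrot⟩ := idx_spec hq₀ne
  have hiD : idx q₀ ∈ theD w x := by
    rw [theD, Finset.mem_filter, Finset.mem_range]
    refine ⟨hidx, ?_⟩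
    rw [← hq₀, hrot, ← hxq]
    exact hxw
  have hcard : (theD w x).card ≤ (rep q₀).length := by
    rw [theD]
    calc _ ≤ (Finset.range (rep (prD x).1).length).card := Finset.card_filter_le _ _
      _ = _ := by rw [Finset.card_range, hq₀]
  have hwl : k * (rep q₀).length ≤ w.length := by
    have h := hxw.length_le
    rw [hxq, wpow_length] at h
    rw [rep_length]
    exact h
  exact ⟨hprim, hk2, hxq, hn0, hiD, hcard, hwl⟩

lemma assign_mem {w x : List α}
    (hx : ∃ (u : List α) (t : ℕ), u ≠ [] ∧ 2 ≤ t ∧ x = wpow u t) (hxw : x <:+: w) :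
    assign w x ∈ smallCircuits w := by
  obtain ⟨hprim, hk2, hxq, hn0, hiD, hcard, hwl⟩ := setup hx hxw
  set q₀ := (prD x).1 with hq₀
  set k := (prD x).2 with hk
  set q := rep q₀ with hq
  set n := q.length with hn
  set D := theD w x with hD
  set j := (D.filter (· < idx q₀)).card with hj
  have hjs : j < D.card := rank_lt hiD
  obtain ⟨k', hk'⟩ : ∃ k', k = k' + 2 := ⟨k - 2, by omega⟩
  have e1 : (k - 1) * n = k' * n + n := by
    have hkk : k - 1 = k' + 1 := by omega
    rw [hkk, Nat.add_mul, Nat.one_mul]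
  have e2 : k * n = k' * n + n + n := by
    rw [hk', Nat.add_mul]; omega
  have hqne : q ≠ [] := List.length_pos_iff.mp hn0
  have hDprop : ∀ i' ∈ D, i' < n ∧ wpow (q.rotate i') k <:+: w := by
    intro i' hi'
    rw [hD, theD, Finset.mem_filter, Finset.mem_range] at hi'
    exact hi'
  have hL : (assign w x).2 = (k - 1) * n + j := rfl
  have hC : (assign w x).1 = {y | y ~r q₀} := rfl
  refine ⟨?_, ?_, q₀, hprim, ?_, hC, ?_⟩
  · rw [hL, e1]; omega
  · rw [hL, e1]; omega
  · have hql : q₀.length = n := by rw [hn, hq, rep_length]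
    rw [hL, e1, hql]; omega
  · intro q' hq'
    have hq'q : q ~r q' := (rep_rot q₀).trans hq'.symm
    have hq'ne : q' ≠ [] := by
      intro hnil
      rw [hnil] at hq'q
      have hle := hq'q.perm.length_eq
      simp only [List.length_nil] at hle
      omega
    obtain ⟨m, hm, hrotm⟩ := List.isRotated_iff_mod.mp hq'q
    have hj'lt : m % n < n := Nat.mod_lt _ hn0
    have hrotj' : q.rotate (m % n) = q' := by
      rw [hn, List.rotate_mod]; exact hrotm
    have havail := frac_avail hqne (show 1 ≤ k by omega) hDprop ⟨_, hiD⟩ hj'lt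
    rw [hrotj'] at havail
    refine frac_infix_mono hq'ne ?_ havail
    have hsub : k * q.length - (q.length - D.card) = k' * n + n + D.card := by
      rw [← hn, e2]; omega
    rw [hL, hsub, e1]
    omega

lemma assign_inj {w x₁ x₂ : List α}
    (hx₁ : ∃ (u : List α) (t : ℕ), u ≠ [] ∧ 2 ≤ t ∧ x₁ = wpow u t) (hw₁ : x₁ <:+: w)
    (hx₂ : ∃ (u : List α) (t : ℕ), u ≠ [] ∧ 2 ≤ t ∧ x₂ = wpow u t) (hw₂ : x₂ <:+: w)
    (h : assign w x₁ = assign w x₂) : x₁ = x₂ := by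
  obtain ⟨hprim₁, hk₁, hxq₁, hn₁, hiD₁, hcard₁, -⟩ := setup hx₁ hw₁
  obtain ⟨hprim₂, hk₂, hxq₂, hn₂, hiD₂, hcard₂, -⟩ := setup hx₂ hw₂
  have hSet : {y | y ~r (prD x₁).1} = {y | y ~r (prD x₂).1} := congrArg Prod.fst h
  have hrr : (prD x₂).1 ~r (prD x₁).1 := by
    have := Set.ext_iff.mp hSet (prD x₂).1
    exact this.mpr (List.IsRotated.refl _)
  have hrepeq : rep (prD x₁).1 = rep (prD x₂).1 := (rep_eq hrr).symm
  set n := (rep (prD x₁).1).length with hn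
  have hn' : (rep (prD x₂).1).length = n := by rw [← hrepeq]
  have hLeq : ((prD x₁).2 - 1) * n + ((theD w x₁).filter (· < idx (prD x₁).1)).card =
      ((prD x₂).2 - 1) * n + ((theD w x₂).filter (· < idx (prD x₂).1)).card := by
    have := congrArg Prod.snd h
    simpa [assign, ← hn, hn'] using this
  set j₁ := ((theD w x₁).filter (· < idx (prD x₁).1)).card with hj₁
  set j₂ := ((theD w x₂).filter (· < idx (prD x₂).1)).card with hj₂
  have hj₁n : j₁ < n := lt_of_lt_of_le (rank_lt hiD₁) hcard₁
  have hj₂n : j₂ < n := lt_of_lt_of_le (rank_lt hiD₂) (hn' ▸ hcard₂)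
  -- extract equal quotient and remainder
  have hkeq : (prD x₁).2 = (prD x₂).2 ∧ j₁ = j₂ := by
    have h1 : ((prD x₁).2 - 1) * n + j₁ = ((prD x₂).2 - 1) * n + j₂ := hLeq
    have hmod : j₁ = j₂ := by
      have e1 : (((prD x₁).2 - 1) * n + j₁) % n = j₁ := by
        rw [Nat.add_comm, Nat.add_mul_mod_self_right, Nat.mod_eq_of_lt hj₁n]
      have e2 : (((prD x₂).2 - 1) * n + j₂) % n = j₂ := by
        rw [Nat.add_comm, Nat.add_mul_mod_self_right, Nat.mod_eq_of_lt hj₂n]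
      rw [← e1, ← e2, h1]
    constructor
    · have hdvd : ((prD x₁).2 - 1) * n = ((prD x₂).2 - 1) * n := by omega
      have := Nat.eq_of_mul_eq_mul_right hn₁ hdvd
      omega
    · exact hmod
  obtain ⟨hkk, hjj⟩ := hkeq
  have hDeq : theD w x₁ = theD w x₂ := by
    rw [theD, theD, hrepeq, hkk]
  have hieq : idx (prD x₁).1 = idx (prD x₂).1 := by
    refine rank_inj hiD₁ (hDeq ▸ hiD₂) ?_
    rw [← hj₁, hDeq, hjj]
  obtain ⟨-, hrot₁⟩ := idx_spec (hprim₁.1)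
  obtain ⟨-, hrot₂⟩ := idx_spec (hprim₂.1)
  have hq₀eq : (prD x₁).1 = (prD x₂).1 := by
    rw [← hrot₁, ← hrot₂, hrepeq, hieq]
  rw [hxq₁, hxq₂, hq₀eq, hkk]

end PowAux

/-- For any word `w`, there is an injection from the set of
distinct power factors of `w` of exponent at least 2 into the set of small circuits
of the Rauzy graphs of `w`. -/
theorem powers_inj_smallCircuits {α : Type*} (w : List α) :
    ∃ f : {x : List α | (∃ (u : List α) (t : ℕ), u ≠ [] ∧ 2 ≤ t ∧ x = wpow u t) ∧ x <:+: w}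
          → smallCircuits w,
      Function.Injective f := by
  refine ⟨fun a => ⟨PowAux.assign w a.1, PowAux.assign_mem a.2.1 a.2.2⟩, ?_⟩
  intro a b h
  exact Subtype.ext (PowAux.assign_inj a.2.1 a.2.2 b.2.1 b.2.2 (Subtype.ext_iff.mp h))
end
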